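/- arXiv:math/0205086 — 8 statements merged into one kernel-verified Lean document; each statement's English description precedes it below -/
import Mathlib

section
/- (Amalgamation of one-point extensions) Let r be a distance matrix of order n and let a, b ∈ A(r) be two admissible vectors for r. Then there exists a nonnegative real number h such that the vector (b_1, ..., b_n, h) is admissible for the extended matrix r^a, i.e., max_i |a_i - b_i| ≤ h ≤ min_j (a_j + b_j), and for such h the (n+2)×(n+2) matrix extending r by both a and b with mutual distance h is a distance matrix. -/
/-- A distance matrix of order `n`: symmetric, zero diagonal, nonnegative,
satisfying all triangle inequalities. -/
def IsDistMatrix {n : ℕ} (r : Fin n → Fin n → ℝ) : Prop :=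
  (∀ i, r i i = 0) ∧ (∀ i j, r i j = r j i) ∧ (∀ i j, 0 ≤ r i j) ∧
  (∀ i j k, r i j ≤ r i k + r k j)

/-- `a` is an admissible vector for the distance matrix `r`. -/
def Admissible {n : ℕ} (r : Fin n → Fin n → ℝ) (a : Fin n → ℝ) : Prop :=
  ∀ i j, |a i - a j| ≤ r i j ∧ r i j ≤ a i + a j


/-- The matrix `r^a` obtained by appending `a` as last row and column. -/
def extendMatrix {n : ℕ} (r : Fin n → Fin n → ℝ) (a : Fin n → ℝ) :
    Fin (n + 1) → Fin (n + 1) → ℝ := fun i j =>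
  if hi : (i : ℕ) < n then
    if hj : (j : ℕ) < n then r ⟨i, hi⟩ ⟨j, hj⟩ else a ⟨i, hi⟩
  else
    if hj : (j : ℕ) < n then a ⟨j, hj⟩ else 0

lemma adm_nonneg {n : ℕ} {r : Fin n → Fin n → ℝ} (hr : IsDistMatrix r)
    {a : Fin n → ℝ} (ha : Admissible r a) (i : Fin n) : 0 ≤ a i := by
  have := (ha i i).2
  have h0 := hr.1 i
  linarith

lemma snoc_lt {n : ℕ} (b : Fin n → ℝ) (h : ℝ) (i : Fin (n+1)) (hi : (i : ℕ) < n) :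
    (Fin.snoc b h : Fin (n+1) → ℝ) i = b ⟨i, hi⟩ := by
  simp [Fin.snoc, hi]; rfl

lemma snoc_ge {n : ℕ} (b : Fin n → ℝ) (h : ℝ) (i : Fin (n+1)) (hi : ¬ (i : ℕ) < n) :
    (Fin.snoc b h : Fin (n+1) → ℝ) i = h := by
  simp [Fin.snoc, hi]

lemma extend_isDist {n : ℕ} {r : Fin n → Fin n → ℝ} (hr : IsDistMatrix r)
    {a : Fin n → ℝ} (ha : Admissible r a) : IsDistMatrix (extendMatrix r a) := by
  obtain ⟨hdiag, hsym, hnn, htri⟩ := hr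
  refine ⟨?_, ?_, ?_, ?_⟩
  · intro i
    by_cases hi : (i : ℕ) < n <;> simp [extendMatrix, hi, hdiag]
  · intro i j
    by_cases hi : (i : ℕ) < n <;> by_cases hj : (j : ℕ) < n <;>
      simp [extendMatrix, hi, hj, hsym]
  · intro i j
    by_cases hi : (i : ℕ) < n <;> by_cases hj : (j : ℕ) < n <;>
      simp [extendMatrix, hi, hj, hnn]
    · exact adm_nonneg ⟨hdiag, hsym, hnn, htri⟩ ha _
    · exact adm_nonneg ⟨hdiag, hsym, hnn, htri⟩ ha _
  · intro i j k
    by_cases hi : (i : ℕ) < n <;> by_cases hj : (j : ℕ) < n <;>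
      by_cases hk : (k : ℕ) < n <;>
      simp only [extendMatrix, hi, hj, hk, dite_true, dite_false, dif_pos, dif_neg]
    · exact htri _ _ _
    · exact (ha _ _).2
    · -- a i ≤ r i k + a k
      have := abs_le.1 (ha ⟨i, hi⟩ ⟨k, hk⟩).1
      linarith [this.1]
    · linarith [adm_nonneg ⟨hdiag, hsym, hnn, htri⟩ ha ⟨i, hi⟩]
    · have := abs_le.1 (ha ⟨j, hj⟩ ⟨k, hk⟩).1
      rw [hsym]
      linarith [this.1]
    · linarith [adm_nonneg ⟨hdiag, hsym, hnn, htri⟩ ha ⟨j, hj⟩]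
    · linarith [adm_nonneg ⟨hdiag, hsym, hnn, htri⟩ ha ⟨k, hk⟩]
    · norm_num

theorem stmt8 {n : ℕ} (r : Fin n → Fin n → ℝ) (hr : IsDistMatrix r)
    (a b : Fin n → ℝ) (ha : Admissible r a) (hb : Admissible r b) :
    (∃ h : ℝ, 0 ≤ h ∧ (∀ i, |a i - b i| ≤ h) ∧ (∀ j, h ≤ a j + b j)) ∧
    ∀ h : ℝ, 0 ≤ h → (∀ i, |a i - b i| ≤ h) → (∀ j, h ≤ a j + b j) →
      Admissible (extendMatrix r a) (Fin.snoc b h) ∧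
      IsDistMatrix (extendMatrix (extendMatrix r a) (Fin.snoc b h)) := by
  have hanneg : ∀ i, 0 ≤ a i := adm_nonneg hr ha
  have hbnneg : ∀ i, 0 ≤ b i := adm_nonneg hr hb
  have key : ∀ i j, |a i - b i| ≤ a j + b j := by
    intro i j
    have h1 := abs_le.1 (ha i j).1
    have h2 := abs_le.1 (hb i j).1
    have h3 := (ha i j).2
    have h4 := (hb i j).2
    rw [abs_le]
    constructor <;> linarith [h1.1, h1.2, h2.1, h2.2]
  constructor
  · -- existence
    set s : Finset ℝ := insert (0:ℝ) (Finset.image (fun i => |a i - b i|) Finset.univ) with hs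
    have hne : s.Nonempty := ⟨0, by simp [hs]⟩
    refine ⟨s.max' hne, ?_, ?_, ?_⟩
    · exact s.le_max' 0 (by simp [hs])
    · intro i
      exact s.le_max' _ (by simp [hs])
    · intro j
      apply Finset.max'_le
      intro y hy
      simp [hs] at hy
      rcases hy with h0 | ⟨i, hi⟩
      · have := hanneg j; have := hbnneg j; linarith
      · rw [← hi]; exact key i j
  · intro h h0 hmax hmin
    have hadm : Admissible (extendMatrix r a) (Fin.snoc b h) := by
      intro i j
      by_cases hi : (i : ℕ) < n <;> by_cases hj : (j : ℕ) < n
      · rw [snoc_lt b h i hi, snoc_lt b h j hj]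
        simp only [extendMatrix, hi, hj, dif_pos]
        exact hb _ _
      · rw [snoc_lt b h i hi, snoc_ge b h j hj]
        simp only [extendMatrix, hi, hj, dif_pos, dif_neg, not_false_iff]
        have h1 := abs_le.1 (hmax ⟨i, hi⟩)
        have h2 := hmin ⟨i, hi⟩
        rw [abs_le]
        refine ⟨⟨by linarith, by linarith⟩, by linarith⟩
      · rw [snoc_ge b h i hi, snoc_lt b h j hj]
        simp only [extendMatrix, hi, hj, dif_pos, dif_neg, not_false_iff]
        have h1 := abs_le.1 (hmax ⟨j, hj⟩)
        have h2 := hmin ⟨j, hj⟩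
        rw [abs_le]
        refine ⟨⟨by linarith, by linarith⟩, by linarith⟩
      · rw [snoc_ge b h i hi, snoc_ge b h j hj]
        simp only [extendMatrix, hi, hj, dif_neg, not_false_iff]
        simp
        linarith
    exact ⟨hadm, extend_isDist (extend_isDist hr ha) hadm⟩
end

section
/- For any distance matrix r of order n and any a, b ∈ A(r), the inequality max_i |a_i - b_i| ≤ min_j (a_j + b_j) holds (so the interval [max_i |a_i - b_i|, min_j (a_j + b_j)] of possible amalgamation distances is nonempty). -/
theorem Admissible.sub_le_add {n : ℕ} {r : Fin n → Fin n → ℝ} {a b : Fin n → ℝ}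
    (ha : Admissible r a) (hb : Admissible r b) (i j : Fin n) : a i - b i ≤ a j + b j := by
  have : a i - a j ≤ b i + b j :=
    calc a i - a j ≤ |a i - a j| := le_abs_self _
      _ ≤ r i j := (ha i j).1
      _ ≤ b i + b j := (hb i j).2
  linarith

theorem stmt9_general {n : ℕ} (r : Fin n → Fin n → ℝ)
    (a b : Fin n → ℝ) (ha : Admissible r a) (hb : Admissible r b) :
    ∀ i j, |a i - b i| ≤ a j + b j := fun i j =>
  abs_sub_le_iff.2 ⟨ha.sub_le_add hb i j, (hb.sub_le_add ha i j).trans_eq (add_comm _ _)⟩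

theorem stmt9 {n : ℕ} (r : Fin n → Fin n → ℝ) (hr : IsDistMatrix r)
    (a b : Fin n → ℝ) (ha : Admissible r a) (hb : Admissible r b) :
    ∀ i j, |a i - b i| ≤ a j + b j :=
  stmt9_general r a b ha hb
end

section
/- (Projection of admissible vectors is surjective, one step) Let r be a distance matrix of order n and a ∈ A(r), giving the extended matrix r^a of order n+1. Then the coordinate projection (b_1,...,b_n,b_{n+1}) ↦ (b_1,...,b_n) maps A(r^a) onto A(r): for every b ∈ A(r) there exists h ≥ 0 with (b_1,...,b_n,h) ∈ A(r^a). -/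
section extendMatrix

variable {n : ℕ} (r : Fin n → Fin n → ℝ) (a : Fin n → ℝ)

@[simp]
lemma extendMatrix_castSucc_castSucc (i j : Fin n) :
    extendMatrix r a i.castSucc j.castSucc = r i j := by
  simp [extendMatrix]

@[simp]
lemma extendMatrix_castSucc_last (i : Fin n) :
    extendMatrix r a i.castSucc (Fin.last n) = a i := by
  simp [extendMatrix]

@[simp]
lemma extendMatrix_last_castSucc (j : Fin n) :
    extendMatrix r a (Fin.last n) j.castSucc = a j := by
  simp [extendMatrix]

@[simp]
lemma extendMatrix_last_last : extendMatrix r a (Fin.last n) (Fin.last n) = 0 := by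
  simp [extendMatrix]

end extendMatrix

lemma Admissible.castSucc {n : ℕ} {r : Fin n → Fin n → ℝ} {a : Fin n → ℝ}
    {c : Fin (n + 1) → ℝ} (hc : Admissible (extendMatrix r a) c) :
    Admissible r (fun i => c i.castSucc) := fun i j => by
  simpa using hc i.castSucc j.castSucc

lemma Admissible.snoc {n : ℕ} {r : Fin n → Fin n → ℝ} {a b : Fin n → ℝ}
    (hb : Admissible r b) {h : ℝ} (h0 : 0 ≤ h)
    (hab : ∀ i, h ∈ Set.Icc |a i - b i| (a i + b i)) :
    Admissible (extendMatrix r a) (Fin.snoc b h) := by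
  have hlast : ∀ i, |b i - h| ≤ a i ∧ a i ≤ b i + h := fun i => by
    obtain ⟨hlo, hhi⟩ := hab i
    rw [abs_le] at hlo ⊢
    constructor
    · constructor <;> linarith
    · linarith
  intro i j
  induction i using Fin.lastCases <;> induction j using Fin.lastCases
  · simp [h0]
  · simpa [abs_sub_comm, add_comm] using hlast _
  · simpa using hlast _
  · simpa using hb _ _

lemma Admissible.abs_sub_le_add {n : ℕ} {r : Fin n → Fin n → ℝ} {a b : Fin n → ℝ}
    (ha : Admissible r a) (hb : Admissible r b) (i j : Fin n) :
    |a i - b i| ≤ a j + b j := by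
  have hai := abs_le.mp (ha i j).1
  have hbi := abs_le.mp (hb i j).1
  rw [abs_le]
  constructor <;> linarith [(ha i j).2, (hb i j).2]

lemma Real.exists_nonneg_mem_Icc_of_le {ι : Type*} [Finite ι] {l u : ι → ℝ}
    (hl : ∀ i, 0 ≤ l i) (hlu : ∀ i j, l i ≤ u j) :
    ∃ h, 0 ≤ h ∧ ∀ i, h ∈ Set.Icc (l i) (u i) :=
  ⟨⨆ i, l i, Real.iSup_nonneg hl, fun i =>
    ⟨le_ciSup (Finite.bddAbove_range l) i,
      Real.iSup_le (fun k => hlu k i) ((hl i).trans (hlu i i))⟩⟩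

theorem stmt10_general {n : ℕ} (r : Fin n → Fin n → ℝ)
    (a : Fin n → ℝ) (ha : Admissible r a) :
    (fun (b : Fin (n + 1) → ℝ) (i : Fin n) => b (Fin.castSucc i)) ''
        {b | Admissible (extendMatrix r a) b} = {b | Admissible r b} := by
  ext b
  constructor
  · rintro ⟨c, hc, rfl⟩
    exact hc.castSucc
  · intro hb
    obtain ⟨h, h0, hab⟩ := Real.exists_nonneg_mem_Icc_of_le
      (fun i => abs_nonneg (a i - b i)) (ha.abs_sub_le_add hb)
    exact ⟨Fin.snoc b h, hb.snoc h0 hab, funext fun i => Fin.snoc_castSucc ..⟩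

theorem stmt10 {n : ℕ} (r : Fin n → Fin n → ℝ) (hr : IsDistMatrix r)
    (a : Fin n → ℝ) (ha : Admissible r a) :
    (fun (b : Fin (n + 1) → ℝ) (i : Fin n) => b (Fin.castSucc i)) ''
        {b | Admissible (extendMatrix r a) b} = {b | Admissible r b} :=
  stmt10_general r a ha
end

section
/- (Surjectivity of projections, general) For natural numbers n < N and any distance matrix r of order N, the coordinate projection ℝ^N → ℝ^n maps A(r) onto A(p_n(r)), where p_n(r) is the NW-corner of r of order n: for every a ∈ A(p_n(r)) there exist b_{n+1},...,b_N such that (a_1,...,a_n,b_{n+1},...,b_N) ∈ A(r). -/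
lemma abs_sub_le_and_le_add_of_abs_sub_le {x d c : ℝ} (h₁ : |x - d| ≤ c) (h₂ : c ≤ x + d) :
    |x - c| ≤ d ∧ d ≤ x + c := by
  rw [abs_le] at h₁ ⊢
  exact ⟨⟨by linarith, by linarith⟩, by linarith⟩

section AdmissibleOn

open Finset Function
open scoped NNReal

variable {ι : Type*} {r : ι → ι → ℝ} {s : Finset ι} {a : ι → ℝ}

def AdmissibleOn (r : ι → ι → ℝ) (s : Finset ι) (a : ι → ℝ) : Prop :=
  ∀ i ∈ s, ∀ j ∈ s, |a i - a j| ≤ r i j ∧ r i j ≤ a i + a j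

lemma admissibleOn_map_iff {κ : Type*} (e : κ ↪ ι) (s : Finset κ) :
    AdmissibleOn r (s.map e) a ↔ AdmissibleOn (fun i j => r (e i) (e j)) s (a ∘ e) := by
  simp [AdmissibleOn]

lemma AdmissibleOn.exists_update_insert [DecidableEq ι] (hsymm : ∀ i j, r i j = r j i)
    (htri : ∀ i j k, r i j ≤ r i k + r k j) {k : ι} (hk : r k k = 0)
    (ha : AdmissibleOn r s a) (hks : k ∉ s) :
    ∃ c, AdmissibleOn r (insert k s) (update a k c) := by
  -- taken in `ℝ≥0` so that `c = 0 ≥ 0` also when `s = ∅`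
  set c : ℝ≥0 := s.sup fun i => ‖a i - r i k‖₊
  have hlow : ∀ i ∈ s, |a i - r i k| ≤ c := fun i hi => by
    have h := NNReal.coe_le_coe.mpr (le_sup (f := fun i => ‖a i - r i k‖₊) hi)
    rwa [coe_nnnorm, Real.norm_eq_abs] at h
  have hupp : ∀ j ∈ s, (c : ℝ) ≤ a j + r j k := fun j hj => by
    obtain ⟨i, hi, hci⟩ := exists_mem_eq_sup s ⟨j, hj⟩ fun i => ‖a i - r i k‖₊
    obtain ⟨hij, hij'⟩ := ha i hi j hj
    have : |a i - r i k| ≤ a j + r j k := abs_le.mpr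
      ⟨by linarith [htri i k j], by linarith [le_of_abs_le hij, htri i j k, hsymm k j]⟩
    simpa [c, hci, ← Real.norm_eq_abs] using this
  have hpair : ∀ i ∈ s, |a i - c| ≤ r i k ∧ r i k ≤ a i + c := fun i hi =>
    abs_sub_le_and_le_add_of_abs_sub_le (hlow i hi) (hupp i hi)
  have hne : ∀ i ∈ s, i ≠ k := fun i hi hik => hks (hik ▸ hi)
  refine ⟨c, fun i hi j hj => ?_⟩
  rw [mem_insert] at hi hj
  rcases hi with rfl | hi <;> rcases hj with rfl | hj
  · simp [hk]
  · rw [update_self, update_of_ne (hne j hj), abs_sub_comm, hsymm, add_comm]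
    exact hpair j hj
  · rw [update_self, update_of_ne (hne i hi)]
    exact hpair i hi
  · rw [update_of_ne (hne i hi), update_of_ne (hne j hj)]
    exact ha i hi j hj

lemma AdmissibleOn.exists_insert [DecidableEq ι] (hsymm : ∀ i j, r i j = r j i)
    (htri : ∀ i j k, r i j ≤ r i k + r k j) {k : ι} (hk : r k k = 0)
    (ha : AdmissibleOn r s a) :
    ∃ b, AdmissibleOn r (insert k s) b ∧ Set.EqOn b a s := by
  by_cases hks : k ∈ s
  · exact ⟨a, by rwa [insert_eq_of_mem hks], Set.eqOn_refl a s⟩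
  · obtain ⟨c, hc⟩ := ha.exists_update_insert hsymm htri hk hks
    exact ⟨update a k c, hc, fun i hi => update_of_ne (ne_of_mem_of_not_mem hi hks) c a⟩

lemma AdmissibleOn.exists_union [DecidableEq ι] (hsymm : ∀ i j, r i j = r j i)
    (htri : ∀ i j k, r i j ≤ r i k + r k j) (hdiag : ∀ i, r i i = 0)
    (ha : AdmissibleOn r s a) (t : Finset ι) :
    ∃ b, AdmissibleOn r (s ∪ t) b ∧ Set.EqOn b a s := by
  induction t using Finset.induction_on with
  | empty => exact ⟨a, by rwa [union_empty], Set.eqOn_refl a s⟩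
  | insert k t _ ih =>
    obtain ⟨b, hb, hba⟩ := ih
    obtain ⟨b', hb', hb'b⟩ := hb.exists_insert hsymm htri (hdiag k)
    refine ⟨b', by rwa [union_insert], fun i hi => ?_⟩
    rw [hb'b (mem_union_left t hi), hba hi]

end AdmissibleOn

theorem stmt11 {n N : ℕ} (hnN : n < N) (r : Fin N → Fin N → ℝ)
    (hr : IsDistMatrix r)
    (a : Fin n → ℝ)
    (ha : Admissible (fun i j : Fin n => r (Fin.castLE hnN.le i) (Fin.castLE hnN.le j)) a) :
    ∃ b : Fin N → ℝ, Admissible r b ∧ ∀ i : Fin n, b (Fin.castLE hnN.le i) = a i := by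
  obtain ⟨hdiag, hsymm, -, htri⟩ := hr
  let e : Fin n ↪ Fin N := Fin.castLEEmb hnN.le
  let a' : Fin N → ℝ := Function.extend e a 0
  have ha' : a' ∘ e = a := funext fun i => e.injective.extend_apply a 0 i
  have hs : AdmissibleOn r (Finset.univ.map e) a' := by
    rw [admissibleOn_map_iff, ha']
    simpa [AdmissibleOn, Admissible, e] using ha
  obtain ⟨b, hb, hba⟩ := hs.exists_union hsymm htri hdiag Finset.univ
  refine ⟨b, fun i j => by simpa [AdmissibleOn] using hb i (by simp) j (by simp), fun i => ?_⟩
  rw [← congrFun ha' i]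
  exact hba (Finset.mem_map_of_mem e (Finset.mem_univ i))
end

section
/- Every universal distance matrix is weakly universal: if r is an infinite distance matrix such that for every n, the set of columns {(r_{1,j},...,r_{n,j}) : j > n} is dense in A(p_n(r)), then for every n, every distance matrix q of order n, and every ε > 0 there exist indices i_1 < ... < i_n with max_{k,s} |r_{i_k,i_s} - q_{k,s}| < ε. -/
/-- An infinite distance matrix on the natural numbers. -/
def IsInfDistMatrix (r : ℕ → ℕ → ℝ) : Prop :=
  (∀ i, r i i = 0) ∧ (∀ i j, r i j = r j i) ∧ (∀ i j, 0 ≤ r i j) ∧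
  (∀ i j k, r i j ≤ r i k + r k j)

/-- The NW-corner of order `n` of an infinite matrix. -/
def corner (r : ℕ → ℕ → ℝ) (n : ℕ) : Fin n → Fin n → ℝ := fun i j => r i j

/-- `r` is a universal distance matrix: for every `n`, the columns
`(r_{1,m},…,r_{n,m})`, `m > n`, are dense in the set of admissible vectors of
the NW-corner of order `n`. -/
def IsUniversal (r : ℕ → ℕ → ℝ) : Prop :=
  ∀ (n : ℕ) (a : Fin n → ℝ), Admissible (corner r n) a →
    ∀ ε > (0 : ℝ), ∃ m : ℕ, n ≤ m ∧ ∀ i : Fin n, |r i m - a i| < ε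

/-!
The embedding is built one point at a time. If `φ(1) < … < φ(k)` already realise the first `k`
points of `q` up to `η`, the prescribed distances `t_j = q_{j,k+1} + η` from the new point
satisfy `r_{φ(a),φ(b)} ≤ t_a + t_b`, so the Katětov extension
`f(x) = min_j (t_j + r_{x,φ(j)})` is admissible for every corner of `r`. Universality yields a
column `m` beyond `φ(k)` approximating `f`, and `f(φ(a))` lies in `[q_{a,k+1}, q_{a,k+1} + η]`,
so `m` realises the new row up to `2η`. Halving the tolerance at each step closes the induction.
-/

theorem IsDistMatrix.comp {m n : ℕ} {q : Fin n → Fin n → ℝ} (hq : IsDistMatrix q)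
    (g : Fin m → Fin n) : IsDistMatrix fun i j => q (g i) (g j) :=
  ⟨fun _ => hq.1 _, fun _ _ => hq.2.1 _ _, fun _ _ => hq.2.2.1 _ _, fun _ _ _ => hq.2.2.2 _ _ _⟩

/-- Katětov function: `f x` are the distances from a new point in a one-point metric extension
of `r`. -/
def IsKatetov (r : ℕ → ℕ → ℝ) (f : ℕ → ℝ) : Prop :=
  ∀ x y, |f x - f y| ≤ r x y ∧ r x y ≤ f x + f y

theorem IsUniversal.exists_approx {r : ℕ → ℕ → ℝ} (hu : IsUniversal r) {f : ℕ → ℝ}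
    (hf : IsKatetov r f) (N : ℕ) {ε : ℝ} (hε : 0 < ε) :
    ∃ m, N ≤ m ∧ ∀ x < N, |r x m - f x| < ε := by
  obtain ⟨m, hNm, hm⟩ := hu N (fun i => f i) (fun i j => hf i j) ε hε
  exact ⟨m, hNm, fun x hx => hm ⟨x, hx⟩⟩

section Katetov

variable {r : ℕ → ℕ → ℝ} {ι : Type*} [Fintype ι] [Nonempty ι]

/-- The largest Katětov function `f` with `f (p j) ≤ t j` for all `j`. -/
noncomputable def katetovExt (r : ℕ → ℕ → ℝ) (p : ι → ℕ) (t : ι → ℝ) (x : ℕ) : ℝ :=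
  Finset.univ.inf' Finset.univ_nonempty fun j => t j + r x (p j)

theorem katetovExt_le (p : ι → ℕ) (t : ι → ℝ) (x : ℕ) (j : ι) :
    katetovExt r p t x ≤ t j + r x (p j) :=
  Finset.inf'_le _ (Finset.mem_univ j)

theorem exists_katetovExt_eq (p : ι → ℕ) (t : ι → ℝ) (x : ℕ) :
    ∃ j, katetovExt r p t x = t j + r x (p j) := by
  obtain ⟨j, -, hj⟩ := Finset.exists_mem_eq_inf' Finset.univ_nonempty fun j => t j + r x (p j)
  exact ⟨j, hj⟩

theorem isKatetov_katetovExt (hr : IsInfDistMatrix r) {p : ι → ℕ} {t : ι → ℝ}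
    (ht : ∀ a b, r (p a) (p b) ≤ t a + t b) : IsKatetov r (katetovExt r p t) := by
  obtain ⟨-, hsymm, -, htri⟩ := hr
  intro x y
  obtain ⟨a, ha⟩ := exists_katetovExt_eq (r := r) p t x
  obtain ⟨b, hb⟩ := exists_katetovExt_eq (r := r) p t y
  have hxb := katetovExt_le (r := r) p t x b
  have hya := katetovExt_le (r := r) p t y a
  refine ⟨abs_sub_le_iff.2 ⟨?_, ?_⟩, ?_⟩
  · linarith [htri x (p b) y]
  · linarith [htri y (p a) x, hsymm x y]
  · linarith [htri x y (p a), htri (p a) y (p b), hsymm (p b) y, ht a b]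

end Katetov

section Embedding

variable {r : ℕ → ℕ → ℝ}

theorem exists_approx_last_row (hr : IsInfDistMatrix r) (hu : IsUniversal r) {n : ℕ}
    {q : Fin (n + 2) → Fin (n + 2) → ℝ} (hq : IsDistMatrix q) {φ : Fin (n + 1) → ℕ}
    (hφ : StrictMono φ) {η : ℝ} (hη : 0 < η)
    (happrox : ∀ a b, |r (φ a) (φ b) - q a.castSucc b.castSucc| < η) :
    ∃ m, φ (Fin.last n) < m ∧ ∀ a, |r (φ a) m - q a.castSucc (Fin.last _)| < 2 * η := by
  obtain ⟨-, hqsymm, -, hqtri⟩ := hq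
  set t : Fin (n + 1) → ℝ := fun a => q a.castSucc (Fin.last _) + η
  have ht : ∀ a b, r (φ a) (φ b) ≤ t a + t b := fun a b => by
    linarith [(abs_lt.1 (happrox a b)).2, hqtri a.castSucc b.castSucc (Fin.last _),
      hqsymm (Fin.last _) b.castSucc]
  obtain ⟨m, hm, hfm⟩ := hu.exists_approx (isKatetov_katetovExt hr ht) (φ (Fin.last n) + 1) hη
  refine ⟨m, hm, fun a => ?_⟩
  have hfa := hfm (φ a) (Nat.lt_succ_of_le (hφ.monotone (Fin.le_last a)))
  have upper := katetovExt_le (r := r) φ t (φ a) a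
  obtain ⟨b, hb⟩ := exists_katetovExt_eq (r := r) φ t (φ a)
  dsimp only [t] at upper hb
  rw [abs_lt] at hfa ⊢
  constructor
  · linarith [(abs_lt.1 (happrox a b)).1, hqtri a.castSucc (Fin.last _) b.castSucc]
  · linarith [hr.1 (φ a)]

theorem exists_strictMono_approx (hr : IsInfDistMatrix r) (hu : IsUniversal r) (n : ℕ)
    (q : Fin (n + 1) → Fin (n + 1) → ℝ) (hq : IsDistMatrix q) {ε : ℝ} (hε : 0 < ε) :
    ∃ φ : Fin (n + 1) → ℕ, StrictMono φ ∧ ∀ k s, |r (φ k) (φ s) - q k s| < ε := by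
  induction n generalizing ε with
  | zero =>
    refine ⟨fun _ => 0, Subsingleton.strictMono (α := Fin 1) _, fun k s => ?_⟩
    rw [Subsingleton.elim (α := Fin 1) k s, hq.1, hr.1]
    simpa using hε
  | succ n ih =>
    obtain ⟨φ, hφ, happrox⟩ := ih _ (hq.comp Fin.castSucc) (half_pos hε)
    obtain ⟨m, hm, hnew⟩ := exists_approx_last_row hr hu hq hφ (half_pos hε) happrox
    rw [mul_div_cancel₀ _ two_ne_zero] at hnew
    refine ⟨Fin.snoc φ m, ?_, fun k s => ?_⟩
    · simpa only [Fin.insertNth_last'] using Fin.strictMono_insertNth_last hφ m hm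
    · cases k using Fin.lastCases <;> cases s using Fin.lastCases <;>
        simp only [Fin.snoc_castSucc, Fin.snoc_last]
      · simpa [hr.1, hq.1] using hε
      · rw [hr.2.1, hq.2.1]
        exact hnew _
      · exact hnew _
      · exact (happrox _ _).trans (half_lt_self hε)

end Embedding

theorem stmt15 (r : ℕ → ℕ → ℝ) (hr : IsInfDistMatrix r) (hu : IsUniversal r) :
    ∀ (n : ℕ) (q : Fin n → Fin n → ℝ), IsDistMatrix q →
      ∀ ε > (0 : ℝ), ∃ φ : Fin n → ℕ, StrictMono φ ∧
        ∀ k s : Fin n, |r (φ k) (φ s) - q k s| < ε := by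
  rintro (_ | n) q hq ε hε
  · exact ⟨Fin.elim0, Subsingleton.strictMono _, fun k => k.elim0⟩
  · exact exists_strictMono_approx hr hu n q hq hε
end

section
/- There exists a universal distance matrix: an infinite proper distance matrix r such that for every n ∈ ℕ, every ε > 0, and every admissible vector a ∈ A(p_n(r)), there exists m > n with max_{1≤i≤n} |r_{i,m} - a_i| < ε. -/
/-!
The matrix is built one point at a time, and earlier entries are never changed. The new point
`m` is placed at distances `f x = min_i (b_i + d(x, i))` from the old points, where `b` is a
positive admissible vector of some corner of order `n ≤ m`. Such a Katětov function `f` is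
again positive and admissible for the whole current matrix, so the matrix stays a proper
distance matrix, and `f` agrees with `b` on the corner. Letting `m = Nat.pair n k` and `b` run
through a countable dense set of positive admissible vectors of the corner of order `n`, every
admissible vector becomes a limit of columns, because positive admissible vectors are dense
among admissible ones (move towards a large constant vector).
-/

open Set Filter Topology TopologicalSpace

namespace Urysohn

def PosAdmissible {n : ℕ} (q : Fin n → Fin n → ℝ) : Set (Fin n → ℝ) :=
  {a | (∀ i, 0 < a i) ∧ Admissible q a}

/-- Push `a` towards a large constant vector: `(1 - θ) a + θ M` is positive and admissible
for `0 < θ ≤ 1` as soon as `2 M` bounds `q`. -/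
theorem mem_closure_posAdmissible {n : ℕ} {q : Fin n → Fin n → ℝ} (hq : ∀ i, 0 ≤ q i i)
    {a : Fin n → ℝ} (ha : Admissible q a) : a ∈ closure (PosAdmissible q) := by
  obtain ⟨M, hM0, hM⟩ : ∃ M : ℝ, 0 < M ∧ ∀ i j, q i j ≤ 2 * M := by
    obtain ⟨B, hB⟩ := Finite.bddAbove_range (Function.uncurry q)
    exact ⟨max B 1, by positivity, fun i j =>
      (hB ⟨(i, j), rfl⟩).trans (by linarith [le_max_left B 1, le_max_right B 1])⟩
  have ha0 : ∀ i, 0 ≤ a i := fun i => by linarith [hq i, (ha i i).2]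
  let path : ℝ → Fin n → ℝ := fun θ i => (1 - θ) * a i + θ * M
  have hpath : Tendsto path (𝓝[>] 0) (𝓝 a) := by
    have : Continuous path := by fun_prop
    simpa [path] using this.tendsto 0 |>.mono_left nhdsWithin_le_nhds
  refine mem_closure_of_tendsto hpath (eventually_of_mem (Ioc_mem_nhdsGT one_pos) ?_)
  rintro θ ⟨hθ0, hθ1⟩
  refine ⟨fun i => by simp only [path]; nlinarith [ha0 i], fun i j => ⟨?_, ?_⟩⟩
  · have hij := (ha i j).1
    calc |path θ i - path θ j| = (1 - θ) * |a i - a j| := by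
          simp only [path]
          rw [← abs_of_nonneg (sub_nonneg.2 hθ1), ← abs_mul, abs_of_nonneg (sub_nonneg.2 hθ1)]
          ring_nf
      _ ≤ q i j := by nlinarith [abs_nonneg (a i - a j)]
  · simp only [path]
    nlinarith [(ha i j).2, hM i j]

theorem exists_seq_mem_dense {X : Type*} [TopologicalSpace X] [PseudoMetrizableSpace X]
    [SeparableSpace X] {s : Set X} (hs : s.Nonempty) :
    ∃ u : ℕ → X, (∀ k, u k ∈ s) ∧ s ⊆ closure (range u) := by
  obtain ⟨t, hts, htc, hst⟩ :=
    (IsSeparable.of_separableSpace s).exists_countable_dense_subset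
  obtain ⟨u, rfl⟩ := htc.exists_eq_range (closure_nonempty_iff.1 (hs.mono hst))
  exact ⟨u, fun k => hts (mem_range_self k), hst⟩

open Classical in
noncomputable def admissibleSeq {n : ℕ} (q : Fin n → Fin n → ℝ) : ℕ → Fin n → ℝ :=
  if h : (PosAdmissible q).Nonempty then (exists_seq_mem_dense h).choose else 0

theorem admissibleSeq_mem {n : ℕ} {q : Fin n → Fin n → ℝ} (h : (PosAdmissible q).Nonempty)
    (k : ℕ) : admissibleSeq q k ∈ PosAdmissible q := by
  rw [admissibleSeq, dif_pos h]
  exact (exists_seq_mem_dense h).choose_spec.1 k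

theorem posAdmissible_subset_closure_range {n : ℕ} (q : Fin n → Fin n → ℝ) :
    PosAdmissible q ⊆ closure (range (admissibleSeq q)) := by
  by_cases h : (PosAdmissible q).Nonempty
  · rw [admissibleSeq, dif_pos h]
    exact (exists_seq_mem_dense h).choose_spec.2
  · rw [not_nonempty_iff_eq_empty.1 h]
    exact empty_subset _

theorem exists_admissibleSeq_dist_lt {n : ℕ} {q : Fin n → Fin n → ℝ} (hq : ∀ i, 0 ≤ q i i)
    {a : Fin n → ℝ} (ha : Admissible q a) {ε : ℝ} (hε : 0 < ε) :
    ∃ k, admissibleSeq q k ∈ PosAdmissible q ∧ dist (admissibleSeq q k) a < ε := by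
  have hmem := mem_closure_posAdmissible hq ha
  obtain ⟨_, ⟨k, rfl⟩, hk⟩ := Metric.mem_closure_iff.1
    (closure_minimal (posAdmissible_subset_closure_range q) isClosed_closure hmem) ε hε
  exact ⟨k, admissibleSeq_mem (closure_nonempty_iff.1 ⟨a, hmem⟩) k, dist_comm a _ ▸ hk⟩

structure IsProperDistBelow (d : ℕ → ℕ → ℝ) (m : ℕ) : Prop where
  diag : ∀ i < m, d i i = 0
  symm : ∀ i < m, ∀ j < m, d i j = d j i
  pos : ∀ i < m, ∀ j < m, i ≠ j → 0 < d i j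
  triangle : ∀ i < m, ∀ j < m, ∀ k < m, d i j ≤ d i k + d k j

theorem IsProperDistBelow.nonneg {d : ℕ → ℕ → ℝ} {m : ℕ} (hd : IsProperDistBelow d m)
    {i j : ℕ} (hi : i < m) (hj : j < m) : 0 ≤ d i j := by
  rcases eq_or_ne i j with rfl | hij
  · exact (hd.diag i hi).ge
  · exact (hd.pos i hi j hj hij).le

/-- The largest 1-Lipschitz function taking the values `b` on the points `0, …, n - 1`. -/
noncomputable def katetov (d : ℕ → ℕ → ℝ) {n : ℕ} (b : Fin n → ℝ) (x : ℕ) : ℝ :=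
  ⨅ i, b i + d x i

section Katetov

variable {d : ℕ → ℕ → ℝ} {m n : ℕ} {b : Fin n → ℝ}

theorem katetov_le (x : ℕ) (i : Fin n) : katetov d b x ≤ b i + d x i :=
  ciInf_le (Finite.bddBelow_range _) i

theorem exists_katetov_eq (hn : 0 < n) (x : ℕ) : ∃ i, katetov d b x = b i + d x i :=
  have : Nonempty (Fin n) := ⟨⟨0, hn⟩⟩
  exists_eq_ciInf_of_finite.imp fun _ => Eq.symm

theorem katetov_of_lt (hd : IsProperDistBelow d m) (hnm : n ≤ m)
    (hb : Admissible (corner d n) b) (i : Fin n) : katetov d b i = b i := by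
  have : Nonempty (Fin n) := ⟨i⟩
  refine le_antisymm ?_ (le_ciInf fun j => ?_)
  · simpa [hd.diag i (i.2.trans_le hnm)] using katetov_le (d := d) (b := b) i i
  · linarith [abs_sub_le_iff.1 (hb i j).1, show corner d n i j = d i j from rfl]

theorem katetov_mem_posAdmissible (hd : IsProperDistBelow d m) (hn : 0 < n) (hnm : n ≤ m)
    (hb : b ∈ PosAdmissible (corner d n)) :
    (fun x : Fin m => katetov d b x) ∈ PosAdmissible (corner d m) := by
  have hlt : ∀ i : Fin n, (i : ℕ) < m := fun i => i.2.trans_le hnm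
  refine ⟨fun x => ?_, fun x y => ⟨abs_sub_le_iff.2 ⟨?_, ?_⟩, ?_⟩⟩
  · obtain ⟨i, hi⟩ := exists_katetov_eq (d := d) (b := b) hn x
    simp only [hi]
    linarith [hb.1 i, hd.nonneg x.2 (hlt i)]
  · obtain ⟨i, hi⟩ := exists_katetov_eq (d := d) (b := b) hn y
    simp only [corner, hi]
    linarith [katetov_le (d := d) (b := b) x i, hd.triangle x x.2 i (hlt i) y y.2]
  · obtain ⟨i, hi⟩ := exists_katetov_eq (d := d) (b := b) hn x
    simp only [corner, hi]
    linarith [katetov_le (d := d) (b := b) y i, hd.triangle y y.2 i (hlt i) x x.2,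
      hd.symm x x.2 y y.2]
  · obtain ⟨i, hi⟩ := exists_katetov_eq (d := d) (b := b) hn x
    obtain ⟨j, hj⟩ := exists_katetov_eq (d := d) (b := b) hn y
    simp only [corner, hi, hj]
    linarith [(hb.2 i j).2, show corner d n i j = d i j from rfl,
      hd.triangle x x.2 y y.2 i (hlt i), hd.triangle i (hlt i) y y.2 j (hlt j),
      hd.symm j (hlt j) y y.2]

end Katetov

def extend (d : ℕ → ℕ → ℝ) (m : ℕ) (c : ℕ → ℝ) (i j : ℕ) : ℝ :=
  if i = m then (if j = m then 0 else c j) else if j = m then c i else d i j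

section Extend

variable {d : ℕ → ℕ → ℝ} {m : ℕ} {c : ℕ → ℝ} {i j : ℕ}

theorem extend_of_lt (hi : i < m) (hj : j < m) : extend d m c i j = d i j := by
  simp [extend, hi.ne, hj.ne]

theorem extend_left (hi : i < m) : extend d m c i m = c i := by
  simp [extend, hi.ne]

theorem IsProperDistBelow.extend (hd : IsProperDistBelow d m)
    (hc : (fun x : Fin m => c x) ∈ PosAdmissible (corner d m)) :
    IsProperDistBelow (extend d m c) (m + 1) := by
  have hpos : ∀ x < m, 0 < c x := fun x hx => hc.1 ⟨x, hx⟩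
  have hlip : ∀ x < m, ∀ y < m, c x - c y ≤ d x y := fun x hx y hy =>
    (abs_sub_le_iff.1 (hc.2 ⟨x, hx⟩ ⟨y, hy⟩).1).1
  have hsum : ∀ x < m, ∀ y < m, d x y ≤ c x + c y := fun x hx y hy => (hc.2 ⟨x, hx⟩ ⟨y, hy⟩).2
  constructor
  · intro i hi
    grind [Urysohn.extend, hd.diag]
  · intro i hi j hj
    grind [Urysohn.extend, hd.symm]
  · intro i hi j hj hij
    grind [Urysohn.extend, hd.pos]
  · intro i hi j hj k hk
    grind [Urysohn.extend, hd.triangle, hd.symm]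

end Extend

open Classical in
noncomputable def candidateColumn (d : ℕ → ℕ → ℝ) (m n k : ℕ) : ℕ → ℝ :=
  if 0 < n ∧ n ≤ m ∧ admissibleSeq (corner d n) k ∈ PosAdmissible (corner d n) then
    katetov d (admissibleSeq (corner d n) k)
  else katetov d (fun _ : Fin 1 => 1)

theorem candidateColumn_mem_posAdmissible {d : ℕ → ℕ → ℝ} {m : ℕ} (hd : IsProperDistBelow d m)
    (n k : ℕ) : (fun x : Fin m => candidateColumn d m n k x) ∈ PosAdmissible (corner d m) := by
  unfold candidateColumn
  split_ifs with h
  · exact katetov_mem_posAdmissible hd h.1 h.2.1 h.2.2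
  rcases m.eq_zero_or_pos with rfl | hm
  · exact ⟨finZeroElim, finZeroElim⟩
  refine katetov_mem_posAdmissible hd one_pos hm ⟨fun _ => one_pos, fun i j => ?_⟩
  simp [Subsingleton.elim i j, corner, hd.diag 0 hm]

noncomputable def stage : ℕ → ℕ → ℕ → ℝ
  | 0 => fun _ _ => 0
  | m + 1 => extend (stage m) m (candidateColumn (stage m) m m.unpair.1 m.unpair.2)

theorem isProperDistBelow_stage : ∀ m, IsProperDistBelow (stage m) m
  | 0 => ⟨by simp, by simp, by simp, by simp⟩
  | m + 1 => (isProperDistBelow_stage m).extend (candidateColumn_mem_posAdmissible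
      (isProperDistBelow_stage m) _ _)

theorem stage_of_le {m N i j : ℕ} (h : m ≤ N) (hi : i < m) (hj : j < m) :
    stage N i j = stage m i j := by
  induction N, h using Nat.le_induction with
  | base => rfl
  | succ N hmN ih => rw [stage, extend_of_lt (hi.trans_le hmN) (hj.trans_le hmN), ih]

noncomputable def universalMatrix (i j : ℕ) : ℝ :=
  stage (max i j + 1) i j

theorem universalMatrix_eq_stage {N i j : ℕ} (hi : i < N) (hj : j < N) :
    universalMatrix i j = stage N i j :=
  (stage_of_le (by omega) (by omega) (by omega)).symm

theorem isInfDistMatrix_universalMatrix : IsInfDistMatrix universalMatrix := by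
  refine ⟨fun i => ?_, fun i j => ?_, fun i j => ?_, fun i j k => ?_⟩
  · rw [universalMatrix_eq_stage (N := i + 1) (by omega) (by omega)]
    exact (isProperDistBelow_stage _).diag i (by omega)
  · rw [universalMatrix_eq_stage (N := i + j + 1) (by omega) (by omega),
      universalMatrix_eq_stage (N := i + j + 1) (by omega) (by omega)]
    exact (isProperDistBelow_stage _).symm i (by omega) j (by omega)
  · rw [universalMatrix_eq_stage (N := i + j + 1) (by omega) (by omega)]
    exact (isProperDistBelow_stage _).nonneg (by omega) (by omega)
  · rw [universalMatrix_eq_stage (N := i + j + k + 1) (by omega) (by omega),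
      universalMatrix_eq_stage (N := i + j + k + 1) (by omega) (by omega),
      universalMatrix_eq_stage (N := i + j + k + 1) (by omega) (by omega)]
    exact (isProperDistBelow_stage _).triangle i (by omega) j (by omega) k (by omega)

theorem universalMatrix_pos {i j : ℕ} (hij : i ≠ j) : 0 < universalMatrix i j :=
  (isProperDistBelow_stage _).pos i (by omega) j (by omega) hij

theorem universalMatrix_apply_pair {n k : ℕ} (hn : 0 < n)
    (hk : admissibleSeq (corner universalMatrix n) k ∈ PosAdmissible (corner universalMatrix n))
    (i : Fin n) :
    universalMatrix i (Nat.pair n k) = admissibleSeq (corner universalMatrix n) k i := by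
  set m := Nat.pair n k
  have hnm : n ≤ m := Nat.left_le_pair n k
  have hcorner : corner (stage m) n = corner universalMatrix n := by
    ext i j
    exact (universalMatrix_eq_stage (i.2.trans_le hnm) (j.2.trans_le hnm)).symm
  rw [universalMatrix_eq_stage (N := m + 1) (by omega) (by omega), stage,
    extend_left (i.2.trans_le hnm), Nat.unpair_pair, candidateColumn, ← hcorner,
    if_pos ⟨hn, hnm, hcorner ▸ hk⟩]
  exact katetov_of_lt (isProperDistBelow_stage m) hnm (hcorner ▸ hk.2) i

theorem isUniversal_universalMatrix : IsUniversal universalMatrix := by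
  intro n a ha ε hε
  rcases n.eq_zero_or_pos with rfl | hn
  · exact ⟨0, le_rfl, finZeroElim⟩
  obtain ⟨k, hk, hdist⟩ := exists_admissibleSeq_dist_lt
    (fun i => (isInfDistMatrix_universalMatrix.1 i).ge) ha hε
  refine ⟨Nat.pair n k, Nat.left_le_pair n k, fun i => ?_⟩
  rw [universalMatrix_apply_pair hn hk, ← Real.dist_eq]
  exact (dist_le_pi_dist _ _ i).trans_lt hdist

end Urysohn

theorem stmt16 :
    ∃ r : ℕ → ℕ → ℝ, IsInfDistMatrix r ∧ (∀ i j, i ≠ j → 0 < r i j) ∧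
      IsUniversal r :=
  ⟨Urysohn.universalMatrix, Urysohn.isInfDistMatrix_universalMatrix,
    fun _ _ => Urysohn.universalMatrix_pos, Urysohn.isUniversal_universalMatrix⟩
end

section
/- The set of universal distance matrices is a G_δ set in the cone of infinite distance matrices with the product (weak) topology: it can be written as a countable intersection of open sets, namely ⋂_{k} ⋂_{n} ⋂_{a ∈ A(p_n(r)) ∩ ℚ^n} ⋃_{m > n} {r : max_{i≤n} |r_{i,m} - a_i| < 1/k}. -/
/-!
The admissible set `A(ρ)` of an `n × n` distance matrix `ρ` is the image of a retraction
`katetov ρ` of `ℝⁿ` that is nonexpansive towards admissible points in the sup metric and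
depends continuously on `ρ`. So rational vectors `q` replace the `r`-dependent dense subsets
of `A(p_n r)`: `r` is universal iff for all `n`, `k` and `q ∈ ℚⁿ` some column of `r` is
`1/(k+1)`-close to `katetov (p_n r) q`, and each of these conditions is open in `r`.
-/

open Finset

/-- The largest `ρ`-Lipschitz function below `b` (McShane). -/
noncomputable def mcshane {n : ℕ} (ρ : Fin n → Fin n → ℝ) (b : Fin n → ℝ) (i : Fin n) : ℝ :=
  univ.inf' ⟨i, mem_univ i⟩ fun l => b l + ρ i l

/-- Raises the McShane extension just enough to satisfy `ρ i j ≤ a i + a j`. -/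
noncomputable def katetov {n : ℕ} (ρ : Fin n → Fin n → ℝ) (b : Fin n → ℝ) (i : Fin n) : ℝ :=
  max (mcshane ρ b i) (univ.sup' ⟨i, mem_univ i⟩ fun j => ρ i j - mcshane ρ b j)

section Katetov

variable {n : ℕ} {ρ : Fin n → Fin n → ℝ}

lemma mcshane_le_add (hρ : IsDistMatrix ρ) (b : Fin n → ℝ) (i j : Fin n) :
    mcshane ρ b i ≤ mcshane ρ b j + ρ i j := by
  obtain ⟨l, -, hl⟩ := exists_mem_eq_inf' (⟨j, mem_univ j⟩ : (univ : Finset (Fin n)).Nonempty)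
    fun l => b l + ρ j l
  have hil : mcshane ρ b i ≤ b l + ρ i l := inf'_le _ (mem_univ l)
  have hj : mcshane ρ b j = b l + ρ j l := hl
  linarith [hρ.2.2.2 i l j]

lemma mcshane_le_katetov (b : Fin n → ℝ) (i : Fin n) : mcshane ρ b i ≤ katetov ρ b i :=
  le_max_left _ _

lemma sub_mcshane_le_katetov (b : Fin n → ℝ) (i j : Fin n) :
    ρ i j - mcshane ρ b j ≤ katetov ρ b i :=
  (le_sup' (fun j => ρ i j - mcshane ρ b j) (mem_univ j)).trans (le_max_right _ _)

lemma katetov_le_add (hρ : IsDistMatrix ρ) (b : Fin n → ℝ) (i j : Fin n) :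
    katetov ρ b i ≤ katetov ρ b j + ρ i j := by
  refine max_le ?_ (sup'_le _ _ fun k _ => ?_)
  · linarith [mcshane_le_add hρ b i j, mcshane_le_katetov (ρ := ρ) b j]
  · have := sub_mcshane_le_katetov (ρ := ρ) b j k
    linarith [hρ.2.2.2 i k j]

lemma admissible_katetov (hρ : IsDistMatrix ρ) (b : Fin n → ℝ) : Admissible ρ (katetov ρ b) := by
  intro i j
  refine ⟨abs_sub_le_iff.2 ⟨?_, ?_⟩, ?_⟩
  · linarith [katetov_le_add hρ b i j]
  · linarith [katetov_le_add hρ b j i, hρ.2.1 i j]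
  · linarith [sub_mcshane_le_katetov (ρ := ρ) b i j, mcshane_le_katetov (ρ := ρ) b j]

lemma abs_katetov_sub_le (hρ : IsDistMatrix ρ) {a b : Fin n → ℝ} (ha : Admissible ρ a) {ε : ℝ}
    (hb : ∀ i, |b i - a i| ≤ ε) (i : Fin n) : |katetov ρ b i - a i| ≤ ε := by
  have lower : ∀ j, a j - ε ≤ mcshane ρ b j := fun j => le_inf' _ _ fun l _ => by
    linarith [(abs_le.1 (hb l)).1, (abs_le.1 (ha j l).1).2]
  have upper : ∀ j, mcshane ρ b j ≤ a j + ε := fun j => by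
    have : mcshane ρ b j ≤ b j + ρ j j := inf'_le _ (mem_univ j)
    linarith [hρ.1 j, (abs_le.1 (hb j)).2]
  refine abs_le.2 ⟨?_, ?_⟩
  · linarith [lower i, mcshane_le_katetov (ρ := ρ) b i]
  · have : katetov ρ b i ≤ a i + ε :=
      max_le (upper i) (sup'_le _ _ fun k _ => by linarith [lower k, (ha i k).2])
    linarith

end Katetov

lemma IsInfDistMatrix.corner {r : ℕ → ℕ → ℝ} (hr : IsInfDistMatrix r) (n : ℕ) :
    IsDistMatrix (corner r n) :=
  ⟨fun i => hr.1 i, fun i j => hr.2.1 i j, fun i j => hr.2.2.1 i j,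
    fun i j k => hr.2.2.2 i j k⟩

lemma continuous_katetov_corner (n : ℕ) (b : Fin n → ℝ) (i : Fin n) :
    Continuous fun r : ℕ → ℕ → ℝ => katetov (corner r n) b i := by
  have hm : ∀ j : Fin n, Continuous fun r : ℕ → ℕ → ℝ => mcshane (corner r n) b j := fun j =>
    Continuous.finset_inf'_apply _ fun l _ =>
      continuous_const.add (continuous_apply_apply (j : ℕ) (l : ℕ))
  exact (hm i).max <| Continuous.finset_sup'_apply _ fun j _ =>
    (continuous_apply_apply (i : ℕ) (j : ℕ)).sub (hm j)

lemma isOpen_setOf_exists_column_near {n : ℕ} {g : (ℕ → ℕ → ℝ) → Fin n → ℝ}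
    (hg : ∀ i, Continuous fun r => g r i) (ε : ℝ) :
    IsOpen {r : ℕ → ℕ → ℝ | ∃ m, n ≤ m ∧ ∀ i : Fin n, |r i m - g r i| < ε} := by
  have hset : {r : ℕ → ℕ → ℝ | ∃ m, n ≤ m ∧ ∀ i : Fin n, |r i m - g r i| < ε} =
      ⋃ m ≥ n, ⋂ i : Fin n, {r | |r i m - g r i| < ε} := by
    ext r
    simp only [Set.mem_ofPred_eq, Set.mem_iUnion, Set.mem_iInter, exists_prop, ge_iff_le]
  rw [hset]
  exact isOpen_biUnion fun m _ => isOpen_iInter_of_finite fun i =>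
    isOpen_lt ((continuous_apply_apply (i : ℕ) m).sub (hg i)).abs continuous_const

lemma isUniversal_iff_katetov {r : ℕ → ℕ → ℝ} (hr : IsInfDistMatrix r) :
    IsUniversal r ↔ ∀ (n k : ℕ) (q : Fin n → ℚ), ∃ m, n ≤ m ∧
      ∀ i : Fin n, |r i m - katetov (corner r n) (fun l => q l) i| < 1 / ((k : ℝ) + 1) := by
  refine ⟨fun hu n k q => hu n _ (admissible_katetov (hr.corner n) _) _ Nat.one_div_pos_of_nat,
    fun h n a ha ε hε => ?_⟩
  obtain ⟨k, hk⟩ := exists_nat_one_div_lt (half_pos hε)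
  choose q hq using fun i : Fin n => exists_rat_btwn (sub_lt_self (a i) (half_pos hε))
  obtain ⟨m, hnm, hm⟩ := h n k q
  refine ⟨m, hnm, fun i => ?_⟩
  have hqa : |katetov (corner r n) (fun l => q l) i - a i| ≤ ε / 2 :=
    abs_katetov_sub_le (hr.corner n) ha
      (fun j => abs_sub_le_iff.2 ⟨by linarith [(hq j).2], by linarith [(hq j).1]⟩) i
  calc |r i m - a i|
      ≤ |r i m - katetov (corner r n) (fun l => q l) i|
        + |katetov (corner r n) (fun l => q l) i - a i| := abs_sub_le _ _ _
    _ < ε / 2 + ε / 2 := add_lt_add_of_lt_of_le ((hm i).trans hk) hqa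
    _ = ε := add_halves ε

theorem stmt17 :
    IsGδ {r : {r : ℕ → ℕ → ℝ // IsInfDistMatrix r} | IsUniversal r.1} := by
  have hset : {r : {r : ℕ → ℕ → ℝ // IsInfDistMatrix r} | IsUniversal r.1} =
      ⋂ (n : ℕ) (k : ℕ) (q : Fin n → ℚ), Subtype.val ⁻¹'
        {r : ℕ → ℕ → ℝ | ∃ m, n ≤ m ∧
          ∀ i : Fin n, |r i m - katetov (corner r n) (fun l => q l) i| < 1 / ((k : ℝ) + 1)} := by
    ext r
    simpa only [Set.mem_iInter, Set.mem_preimage, Set.mem_ofPred_eq] using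
      isUniversal_iff_katetov r.2
  rw [hset]
  exact .iInter fun n => .iInter fun k => .iInter fun q => IsOpen.isGδ <|
    (isOpen_setOf_exists_column_near (fun i => continuous_katetov_corner n _ i) _).preimage
      continuous_subtype_val
end

section
/- (Gromov–Vershik reconstruction, ball-measure step) Let (X, ρ, μ) be a metric triple with Borel probability measure μ. For μ^ℕ-almost every sequence (x_1, x_2, ...) of i.i.d. μ-distributed points, for every i and every l > 0 with μ(boundary of the ball B^l(x_i)) = 0, one has μ(B^l(x_i)) = lim_{n→∞} (1/n) Σ_{k=1}^n 1_{[0,l)}(ρ(x_k, x_i)), where B^l(x) = {z : ρ(x,z) < l}. -/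
/-!
Fix a countable basis `B` of the topology. By the strong law of large numbers applied to
indicator functions, almost surely the empirical frequency of every finite union of basis sets
converges to its measure; there are only countably many such unions. Every open set `U` is
exhausted from inside by such unions, so for every `a < μ U` its empirical frequencies eventually
exceed `a`. Applied to the interior and to the complement of the closure of a set `E` with
`μ (frontier E) = 0`, this squeezes the empirical frequencies of `E` to `μ E` (the portmanteau
argument).
-/

open MeasureTheory ProbabilityTheory Filter Topology TopologicalSpace

section EmpiricalFrequency

variable {X : Type*}

noncomputable def empiricalFreq (y : ℕ → X) (S : Set X) (n : ℕ) : ℝ :=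
  (∑ k ∈ Finset.range n, S.indicator (1 : X → ℝ) (y k)) / n

theorem empiricalFreq_mono {S T : Set X} (h : S ⊆ T) (y : ℕ → X) (n : ℕ) :
    empiricalFreq y S n ≤ empiricalFreq y T n := by
  refine div_le_div_of_nonneg_right (Finset.sum_le_sum fun k _ => ?_) n.cast_nonneg
  exact Set.indicator_le_indicator_of_subset h (fun _ => zero_le_one) (y k)

theorem empiricalFreq_add_compl (y : ℕ → X) (S : Set X) {n : ℕ} (hn : n ≠ 0) :
    empiricalFreq y S n + empiricalFreq y Sᶜ n = 1 := by
  simp only [empiricalFreq, ← add_div, ← Finset.sum_add_distrib,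
    Set.indicator_self_add_compl_apply, Pi.one_apply, Finset.sum_const, Finset.card_range,
    nsmul_eq_mul, mul_one]
  exact div_self (Nat.cast_ne_zero.mpr hn)

variable [MeasurableSpace X]

theorem ae_tendsto_empiricalFreq {Ω : Type*} [MeasurableSpace Ω] {P : Measure Ω}
    [IsFiniteMeasure P] {μ : Measure X} {x : ℕ → Ω → X} (hmeas : ∀ k, Measurable (x k))
    (hindep : Pairwise fun i j => IndepFun (x i) (x j) P) (hdist : ∀ k, P.map (x k) = μ)
    {S : Set X} (hS : MeasurableSet S) :
    ∀ᵐ ω ∂P, Tendsto (empiricalFreq (x · ω) S) atTop (𝓝 (μ.real S)) := by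
  have hind : Measurable (S.indicator (1 : X → ℝ)) := measurable_one.indicator hS
  have hint : Integrable (S.indicator (1 : X → ℝ) ∘ x 0) P :=
    ((integrable_const 1).indicator hS).comp_measurable (hmeas 0)
  have hident (k : ℕ) :
      IdentDistrib (S.indicator (1 : X → ℝ) ∘ x k) (S.indicator 1 ∘ x 0) P P :=
    IdentDistrib.comp ⟨(hmeas k).aemeasurable, (hmeas 0).aemeasurable,
      (hdist k).trans (hdist 0).symm⟩ hind
  have hmean : P[S.indicator (1 : X → ℝ) ∘ x 0] = μ.real S := by
    rw [← hdist 0, ← integral_indicator_one hS,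
      integral_map (hmeas 0).aemeasurable hind.aestronglyMeasurable]
    rfl
  exact hmean ▸ strong_law_ae_real (fun k => S.indicator 1 ∘ x k) hint
    (fun i j hij => (hindep hij).comp hind hind) hident

variable [TopologicalSpace X]

theorem exists_finset_biUnion_subset_lt_measureReal {B : ℕ → Set X}
    (hB : IsTopologicalBasis (Set.range B)) (μ : Measure X) [IsFiniteMeasure μ]
    {U : Set X} (hU : IsOpen U) {a : ℝ} (ha : a < μ.real U) :
    ∃ s : Finset ℕ, (⋃ i ∈ s, B i) ⊆ U ∧ a < μ.real (⋃ i ∈ s, B i) := by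
  classical
  set s : ℕ → Finset ℕ := fun j => (Finset.range j).filter (B · ⊆ U)
  have hsU (j : ℕ) : (⋃ i ∈ s j, B i) ⊆ U :=
    Set.iUnion₂_subset fun i hi => (Finset.mem_filter.mp hi).2
  have hmono : Monotone fun j => ⋃ i ∈ s j, B i := fun a b hab =>
    Set.biUnion_subset_biUnion_left fun i hi => by
      simp only [s, Finset.coe_filter, Finset.mem_range, Set.mem_ofPred_eq] at hi ⊢
      exact ⟨hi.1.trans_le hab, hi.2⟩
  have hunion : (⋃ j, ⋃ i ∈ s j, B i) = U := by
    refine (Set.iUnion_subset hsU).antisymm fun z hz => ?_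
    obtain ⟨_, ⟨i, rfl⟩, hzi, hiU⟩ := hB.exists_subset_of_mem_open hz hU
    exact Set.mem_iUnion.mpr ⟨i + 1, Set.mem_biUnion (by simp [s, hiU]) hzi⟩
  have htendsto : Tendsto (fun j => μ.real (⋃ i ∈ s j, B i)) atTop (𝓝 (μ.real U)) :=
    (ENNReal.tendsto_toReal (measure_ne_top μ U)).comp
      (hunion ▸ tendsto_measure_iUnion_atTop (μ := μ) hmono)
  obtain ⟨j, hj⟩ := (htendsto.eventually (eventually_gt_nhds ha)).exists
  exact ⟨s j, hsU j, hj⟩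

theorem eventually_lt_empiricalFreq_of_isOpen {B : ℕ → Set X}
    (hB : IsTopologicalBasis (Set.range B)) (μ : Measure X) [IsFiniteMeasure μ] {y : ℕ → X}
    (hy : ∀ s : Finset ℕ,
      Tendsto (empiricalFreq y (⋃ i ∈ s, B i)) atTop (𝓝 (μ.real (⋃ i ∈ s, B i))))
    {U : Set X} (hU : IsOpen U) {a : ℝ} (ha : a < μ.real U) :
    ∀ᶠ n in atTop, a < empiricalFreq y U n := by
  obtain ⟨s, hsU, hs⟩ := exists_finset_biUnion_subset_lt_measureReal hB μ hU ha
  filter_upwards [(hy s).eventually (eventually_gt_nhds hs)] with n hn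
  exact hn.trans_le (empiricalFreq_mono hsU y n)

theorem tendsto_empiricalFreq_of_null_frontier [OpensMeasurableSpace X]
    (μ : Measure X) [IsProbabilityMeasure μ] {y : ℕ → X}
    (hopen : ∀ U, IsOpen U → ∀ a < μ.real U, ∀ᶠ n in atTop, a < empiricalFreq y U n)
    {E : Set X} (hE : μ (frontier E) = 0) :
    Tendsto (empiricalFreq y E) atTop (𝓝 (μ.real E)) := by
  have hinterior : μ.real (interior E) = μ.real E := by
    rw [measureReal_def, measure_interior_of_null_frontier hE, measureReal_def]
  have hexterior : μ.real (interior Eᶜ) = 1 - μ.real E := by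
    rw [interior_compl, probReal_compl_eq_one_sub isClosed_closure.measurableSet,
      measureReal_def, measure_closure_of_null_frontier hE, measureReal_def]
  refine tendsto_order.mpr ⟨fun a ha => ?_, fun a ha => ?_⟩
  · filter_upwards [hopen _ isOpen_interior a (hinterior ▸ ha)] with n hn
    exact hn.trans_le (empiricalFreq_mono interior_subset y n)
  · filter_upwards [hopen _ isOpen_interior (1 - a) (by linarith),
      eventually_ne_atTop 0] with n hn hn0
    have := empiricalFreq_add_compl y E hn0
    have := empiricalFreq_mono (interior_subset (s := Eᶜ)) y n
    linarith

end EmpiricalFrequency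

theorem stmt19_general {X : Type*} [MetricSpace X]
    [TopologicalSpace.SeparableSpace X] [MeasurableSpace X] [BorelSpace X]
    (μ : Measure X) [IsProbabilityMeasure μ]
    {Ω : Type*} [MeasurableSpace Ω] (P : Measure Ω) [IsProbabilityMeasure P]
    (x : ℕ → Ω → X) (hmeas : ∀ k, Measurable (x k))
    (hindep : iIndepFun x P)
    (hdist : ∀ k, P.map (x k) = μ) :
    ∀ᵐ ω ∂P, ∀ i : ℕ, ∀ l : ℝ, 0 < l →
      μ (frontier (Metric.ball (x i ω) l)) = 0 →
      Tendsto
        (fun n : ℕ =>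
          (∑ k ∈ Finset.range n, if dist (x k ω) (x i ω) < l then (1 : ℝ) else 0) / n)
        atTop (nhds (μ (Metric.ball (x i ω) l)).toReal) := by
  obtain ⟨B, hB⟩ := exists_seq_basis X
  have hfreq : ∀ᵐ ω ∂P, ∀ s : Finset ℕ, Tendsto (empiricalFreq (x · ω) (⋃ i ∈ s, B i)) atTop
      (𝓝 (μ.real (⋃ i ∈ s, B i))) :=
    ae_all_iff.mpr fun s => ae_tendsto_empiricalFreq hmeas (fun _ _ hij => hindep.indepFun hij)
      hdist (s.measurableSet_biUnion fun i _ => (hB.isOpen ⟨i, rfl⟩).measurableSet)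
  filter_upwards [hfreq] with ω hω i l _ hl
  have hball := tendsto_empiricalFreq_of_null_frontier μ
    (fun U hU a ha => eventually_lt_empiricalFreq_of_isOpen hB μ hω hU ha) hl
  rw [← measureReal_def]
  convert hball using 1
  funext n
  classical
  simp only [empiricalFreq, Set.indicator_apply, Metric.mem_ball, Pi.one_apply]

/-- Gromov–Vershik reconstruction, ball-measure step: for an i.i.d. sequence of
`μ`-distributed points of a metric triple, almost surely the empirical frequency
of points falling into a ball `B^l(x_i)` whose boundary is `μ`-null converges to
the measure of that ball. -/
theorem stmt19 {X : Type*} [MetricSpace X] [CompleteSpace X]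
    [TopologicalSpace.SeparableSpace X] [MeasurableSpace X] [BorelSpace X]
    (μ : Measure X) [IsProbabilityMeasure μ]
    {Ω : Type*} [MeasurableSpace Ω] (P : Measure Ω) [IsProbabilityMeasure P]
    (x : ℕ → Ω → X) (hmeas : ∀ k, Measurable (x k))
    (hindep : iIndepFun x P)
    (hdist : ∀ k, P.map (x k) = μ) :
    ∀ᵐ ω ∂P, ∀ i : ℕ, ∀ l : ℝ, 0 < l →
      μ (frontier (Metric.ball (x i ω) l)) = 0 →
      Tendsto
        (fun n : ℕ =>
          (∑ k ∈ Finset.range n, if dist (x k ω) (x i ω) < l then (1 : ℝ) else 0) / n)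
        atTop (nhds (μ (Metric.ball (x i ω) l)).toReal) :=
  stmt19_general μ P x hmeas hindep hdist
end
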